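/- If k is a C² solution of the kernel equation on D, then |k(x,y)| ≤ M·e^{2M} for all (x,y) ∈ D, where M := (f̄ + Λ̄)/2. -/

import Mathlib

open MeasureTheory Set
open scoped ENNReal

noncomputable section

/-- The triangular domain `D = {(x,y) : 0 ≤ y ≤ x ≤ 1}`. -/
def Dset : Set (ℝ × ℝ) := {p : ℝ × ℝ | 0 ≤ p.2 ∧ p.2 ≤ p.1 ∧ p.1 ≤ 1}

/-- Partial derivative in the first variable (within `D`). -/
def pd1 (K : ℝ × ℝ → ℝ) (p : ℝ × ℝ) : ℝ := fderivWithin ℝ K Dset p (1, 0)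

/-- Partial derivative in the second variable (within `D`). -/
def pd2 (K : ℝ × ℝ → ℝ) (p : ℝ × ℝ) : ℝ := fderivWithin ℝ K Dset p (0, 1)

/-- `K` is a `C²` solution of the kernel equation on `D`:
(i) `k_xx - k_yy = μ k + f + ∫_y^x k(x,z) f(z,y) dz` on `D`;
(ii) `k_x(x,x) + k_y(x,x) = λ0/2`; (iii) `k_y(x,0) = 0`; (iv) `k(0,0) = 0`. -/
def IsKernelSol (lam0 : ℝ) (c1 : ℝ → ℝ) (f : ℝ → ℝ → ℝ) (K : ℝ × ℝ → ℝ) : Prop :=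
  ContDiffOn ℝ 2 K Dset ∧
  (∀ p ∈ Dset, pd1 (pd1 K) p - pd2 (pd2 K) p =
      (lam0 - c1 p.1 + c1 p.2) * K p + f p.1 p.2 + ∫ z in p.2..p.1, K (p.1, z) * f z p.2) ∧
  (∀ x ∈ Icc (0:ℝ) 1, pd1 K (x, x) + pd2 K (x, x) = lam0 / 2) ∧
  (∀ x ∈ Icc (0:ℝ) 1, pd2 K (x, 0) = 0) ∧
  K (0, 0) = 0

/-- `f̄ := max_{[0,1]²} |f|`. -/
def fbar (f : ℝ → ℝ → ℝ) : ℝ :=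
  sSup ((fun p : ℝ × ℝ => |f p.1 p.2|) '' (Icc (0:ℝ) 1 ×ˢ Icc (0:ℝ) 1))

/-- `Λ̄ := max {λ0, max_D |λ0 - c1(x) + c1(y)|}`. -/
def Lambdabar (lam0 : ℝ) (c1 : ℝ → ℝ) : ℝ :=
  max lam0 (sSup ((fun p : ℝ × ℝ => |lam0 - c1 p.1 + c1 p.2|) '' Dset))

/-- `M := (f̄ + Λ̄)/2`. -/
def Mconst (lam0 : ℝ) (c1 : ℝ → ℝ) (f : ℝ → ℝ → ℝ) : ℝ :=
  (fbar f + Lambdabar lam0 c1) / 2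

/-!
Write `V = k_x + k_y`. By the equation, `V` changes along the characteristics
`t ↦ (m + t, m - t)` at the rate `k_xx - k_yy`, starting from `V = λ0/2` on the diagonal, and `k`
is recovered from `V` by integrating along the edge `y = 0` (where `k_y = 0`) and then in the
direction `(1, 1)`. If `|k(x, y)| ≤ b(x)` on `D`, the right-hand side of the equation is at most
`f̄ + 2M b(x)`, and these two integrations turn the bound `b(x) = M e^{2Mx} + θ e^{(M+1)x}` into
the same bound with `θ / 2`. Starting from any bound of `|k|` on the compact set `D` and letting
`θ → 0` gives `|k(x, y)| ≤ M e^{2Mx} ≤ M e^{2M}`.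
-/

open Filter Topology

lemma isClosed_Dset : IsClosed Dset :=
  (isClosed_le continuous_const continuous_snd).inter
    ((isClosed_le continuous_snd continuous_fst).inter
      (isClosed_le continuous_fst continuous_const))

lemma Dset_subset_unitSquare : Dset ⊆ Icc (0:ℝ) 1 ×ˢ Icc (0:ℝ) 1 :=
  fun _ ⟨h0, hyx, hx1⟩ => ⟨⟨h0.trans hyx, hx1⟩, ⟨h0, hyx.trans hx1⟩⟩

lemma isCompact_Dset : IsCompact Dset :=
  (isCompact_Icc.prod isCompact_Icc).of_isClosed_subset isClosed_Dset Dset_subset_unitSquare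

lemma convex_Dset : Convex ℝ Dset := by
  rintro ⟨x₁, y₁⟩ ⟨h₁, h₂, h₃⟩ ⟨x₂, y₂⟩ ⟨g₁, g₂, g₃⟩ a b ha hb hab
  refine ⟨?_, ?_, ?_⟩ <;> simp only [Prod.smul_mk, Prod.mk_add_mk, smul_eq_mul] <;> nlinarith

lemma mem_interior_Dset {p : ℝ × ℝ} (h0 : 0 < p.2) (hyx : p.2 < p.1) (hx1 : p.1 < 1) :
    p ∈ interior Dset :=
  interior_maximal (t := {q : ℝ × ℝ | 0 < q.2 ∧ q.2 < q.1 ∧ q.1 < 1})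
    (fun _ h => show _ ∈ Dset from ⟨h.1.le, h.2.1.le, h.2.2.le⟩)
    ((isOpen_lt continuous_const continuous_snd).inter
      ((isOpen_lt continuous_snd continuous_fst).inter
        (isOpen_lt continuous_fst continuous_const)))
    ⟨h0, hyx, hx1⟩

lemma uniqueDiffOn_Dset : UniqueDiffOn ℝ Dset :=
  uniqueDiffOn_convex convex_Dset
    ⟨(3 / 4, 1 / 4), mem_interior_Dset (by norm_num) (by norm_num) (by norm_num)⟩

section Constants

variable {lam0 : ℝ} {c1 : ℝ → ℝ} {f : ℝ → ℝ → ℝ}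

lemma abs_le_fbar (hf : ContinuousOn (fun p : ℝ × ℝ => f p.1 p.2) (Icc 0 1 ×ˢ Icc 0 1))
    {x y : ℝ} (hx : x ∈ Icc (0:ℝ) 1) (hy : y ∈ Icc (0:ℝ) 1) : |f x y| ≤ fbar f :=
  le_csSup ((isCompact_Icc.prod isCompact_Icc).bddAbove_image hf.abs) ⟨(x, y), ⟨hx, hy⟩, rfl⟩

lemma fbar_nonneg : 0 ≤ fbar f :=
  Real.sSup_nonneg (by rintro _ ⟨p, -, rfl⟩; exact abs_nonneg _)

lemma abs_mu_le_Lambdabar (hc1 : ContinuousOn c1 (Icc 0 1)) {p : ℝ × ℝ} (hp : p ∈ Dset) :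
    |lam0 - c1 p.1 + c1 p.2| ≤ Lambdabar lam0 c1 := by
  have hμ : ContinuousOn (fun p : ℝ × ℝ => lam0 - c1 p.1 + c1 p.2) Dset :=
    (continuousOn_const.sub (hc1.comp continuous_fst.continuousOn
        fun _ hq => (Dset_subset_unitSquare hq).1)).add
      (hc1.comp continuous_snd.continuousOn fun _ hq => (Dset_subset_unitSquare hq).2)
  exact (le_csSup (isCompact_Dset.bddAbove_image hμ.abs) (mem_image_of_mem _ hp)).trans
    (le_max_right _ _)

lemma abs_lam0_le_Lambdabar (hc1 : ContinuousOn c1 (Icc 0 1)) : |lam0| ≤ Lambdabar lam0 c1 := by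
  simpa using abs_mu_le_Lambdabar (lam0 := lam0) hc1 (p := (0, 0)) ⟨le_rfl, le_rfl, zero_le_one⟩

lemma two_mul_Mconst : 2 * Mconst lam0 c1 f = fbar f + Lambdabar lam0 c1 := by
  unfold Mconst; ring

lemma Mconst_nonneg (hc1 : ContinuousOn c1 (Icc 0 1)) : 0 ≤ Mconst lam0 c1 f := by
  have := (abs_nonneg lam0).trans (abs_lam0_le_Lambdabar (lam0 := lam0) hc1)
  unfold Mconst; linarith [fbar_nonneg (f := f)]

end Constants

lemma abs_sub_le_sub_of_abs_deriv_le {g g' G G' : ℝ → ℝ} {a b : ℝ} (hab : a ≤ b)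
    (hg : ContinuousOn g (Icc a b)) (hG : ContinuousOn G (Icc a b))
    (hg' : ∀ t ∈ Ioo a b, HasDerivAt g (g' t) t) (hG' : ∀ t ∈ Ioo a b, HasDerivAt G (G' t) t)
    (hbound : ∀ t ∈ Ioo a b, |g' t| ≤ G' t) :
    |g b - g a| ≤ G b - G a := by
  have mono : ∀ σ : ℝ, |σ| = 1 → MonotoneOn (fun t => G t - σ * g t) (Icc a b) := by
    intro σ hσ
    refine monotoneOn_of_hasDerivWithinAt_nonneg (f' := fun t => G' t - σ * g' t)
      (convex_Icc a b) (hG.sub (hg.const_smul σ)) ?_ ?_ <;> rw [interior_Icc] <;> intro t ht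
    · exact ((hG' t ht).sub ((hg' t ht).const_mul σ)).hasDerivWithinAt
    · have : σ * g' t ≤ |g' t| := by simpa [abs_mul, hσ] using le_abs_self (σ * g' t)
      linarith [hbound t ht]
  have ha : a ∈ Icc a b := left_mem_Icc.2 hab
  have hb : b ∈ Icc a b := right_mem_Icc.2 hab
  rw [abs_le]
  constructor <;> linarith [mono 1 abs_one ha hb hab, mono (-1) (by simp) ha hb hab]

lemma hasDerivAt_comp_of_mapsTo_Icc {E F : Type*} [NormedAddCommGroup E] [NormedSpace ℝ E]
    [NormedAddCommGroup F] [NormedSpace ℝ F] {K : E → F} {s : Set E} {γ : ℝ → E} {v : E}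
    {a b t : ℝ} (hK : DifferentiableOn ℝ K s) (hγ : HasDerivAt γ v t)
    (hmaps : MapsTo γ (Icc a b) s) (ht : t ∈ Ioo a b) :
    HasDerivAt (K ∘ γ) (fderivWithin ℝ K s (γ t) v) t :=
  ((hK (γ t) (hmaps (Ioo_subset_Icc_self ht))).hasFDerivWithinAt.comp_hasDerivWithinAt t
    hγ.hasDerivWithinAt hmaps).hasDerivAt (Icc_mem_nhds ht.1 ht.2)

lemma exp_sub_one_le_mul_exp (u : ℝ) : Real.exp u - 1 ≤ u * Real.exp u := by
  have h := mul_le_mul_of_nonneg_right (Real.one_sub_le_exp_neg u) (Real.exp_pos u).le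
  rw [← Real.exp_add, neg_add_cancel, Real.exp_zero] at h
  linarith

lemma hasDerivAt_exp_mul (k x : ℝ) :
    HasDerivAt (fun x => Real.exp (k * x)) (k * Real.exp (k * x)) x := by
  simpa [mul_comm] using ((hasDerivAt_id x).const_mul k).exp

lemma le_of_forall_le_add_div_two_pow {a b c : ℝ} (h : ∀ n : ℕ, a ≤ b + c / 2 ^ n) : a ≤ b := by
  have hlim : Tendsto (fun n : ℕ => b + c / 2 ^ n) atTop (𝓝 (b + 0)) :=
    tendsto_const_nhds.add
      (tendsto_const_nhds.div_atTop (tendsto_pow_atTop_atTop_of_one_lt one_lt_two))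
  rw [add_zero] at hlim
  exact ge_of_tendsto' hlim h

def pdDiag (K : ℝ × ℝ → ℝ) (p : ℝ × ℝ) : ℝ := fderivWithin ℝ K Dset p (1, 1)

section Characteristics

variable {K : ℝ × ℝ → ℝ}

lemma pdDiag_eq_add (p : ℝ × ℝ) : pdDiag K p = pd1 K p + pd2 K p := by
  rw [pdDiag, pd1, pd2, ← map_add, Prod.mk_add_mk, add_zero, zero_add]

lemma continuousOn_pdDiag (hK : ContDiffOn ℝ 2 K Dset) : ContinuousOn (pdDiag K) Dset :=
  (hK.continuousOn_fderivWithin uniqueDiffOn_Dset (by norm_num)).clm_apply continuousOn_const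

/-- The mixed derivatives `k_xy` cancel by the symmetry of the second derivative. -/
lemma hasDerivAt_pdDiag_characteristic (hK : ContDiffOn ℝ 2 K Dset) {m t : ℝ}
    (hp : (m + t, m - t) ∈ interior Dset) :
    HasDerivAt (fun t => pdDiag K (m + t, m - t))
      (pd1 (pd1 K) (m + t, m - t) - pd2 (pd2 K) (m + t, m - t)) t := by
  set p : ℝ × ℝ := (m + t, m - t)
  have hD : Dset ∈ 𝓝 p := mem_interior_iff_mem_nhds.mp hp
  set F := fderivWithin ℝ K Dset
  have hF : HasFDerivAt F (fderiv ℝ F p) p :=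
    (((hK.fderivWithin uniqueDiffOn_Dset (m := 1) (by norm_num)).contDiffAt hD).differentiableAt
      one_ne_zero).hasFDerivAt
  set F' := fderiv ℝ F p
  have hKF : ∀ᶠ q in 𝓝 p, HasFDerivAt K (F q) q := by
    filter_upwards [isOpen_interior.mem_nhds hp] with q hq
    have hDq : Dset ∈ 𝓝 q := mem_interior_iff_mem_nhds.mp hq
    rw [show F q = fderiv ℝ K q from fderivWithin_of_mem_nhds hDq]
    exact ((hK.contDiffAt hDq).differentiableAt (by norm_num)).hasFDerivAt
  have hsymm : F' (0, 1) (1, 0) = F' (1, 0) (0, 1) :=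
    second_derivative_symmetric_of_eventually hKF hF _ _
  have happly : ∀ w : ℝ × ℝ, HasFDerivAt (fun q => F q w)
      ((ContinuousLinearMap.apply ℝ ℝ w).comp F') p :=
    fun w => (ContinuousLinearMap.apply ℝ ℝ w).hasFDerivAt.comp p hF
  have hpd : ∀ w : ℝ × ℝ, fderivWithin ℝ (fun q => F q w) Dset p w = F' w w := fun w => by
    rw [fderivWithin_of_mem_nhds hD, (happly w).fderiv]; rfl
  have hpd11 : pd1 (pd1 K) p = F' (1, 0) (1, 0) := hpd (1, 0)
  have hpd22 : pd2 (pd2 K) p = F' (0, 1) (0, 1) := hpd (0, 1)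
  have hγ : HasDerivAt (fun t => (m + t, m - t)) ((1 : ℝ), (-1 : ℝ)) t :=
    ((hasDerivAt_id t).const_add m).prodMk ((hasDerivAt_id t).const_sub m)
  refine ((happly (1, 1)).comp_hasDerivAt t hγ).congr_deriv ?_
  change F' (1, -1) (1, 1) = _
  rw [show ((1 : ℝ), (-1 : ℝ)) = (1, 0) - (0, 1) by simp,
    show ((1 : ℝ), (1 : ℝ)) = (1, 0) + (0, 1) by simp, map_sub, map_add,
    sub_apply, sub_apply, hsymm, hpd11, hpd22]
  ring

lemma abs_pdDiag_le_of_abs_wave_le (hK : ContDiffOn ℝ 2 K Dset) {lam0 : ℝ}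
    (hdiag : ∀ x ∈ Icc (0:ℝ) 1, pd1 K (x, x) + pd2 K (x, x) = lam0 / 2)
    {G w : ℝ → ℝ} (hG : ∀ x, HasDerivAt G (w x) x)
    (hwave : ∀ q ∈ Dset, |pd1 (pd1 K) q - pd2 (pd2 K) q| ≤ w q.1)
    {a b : ℝ} (hab : (a, b) ∈ Dset) :
    |pdDiag K (a, b)| ≤ |lam0| / 2 + (G a - G ((a + b) / 2)) := by
  obtain ⟨hb0, hba, ha1⟩ := hab
  obtain ⟨m, hm⟩ : ∃ m, m = (a + b) / 2 := ⟨_, rfl⟩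
  rw [← hm]
  have hmaps : MapsTo (fun t => (m + t, m - t)) (Icc 0 ((a - b) / 2)) Dset := fun t ht =>
    ⟨by dsimp only; linarith [ht.2], by dsimp only; linarith [ht.1],
      by dsimp only; linarith [ht.2]⟩
  have hcmp := abs_sub_le_sub_of_abs_deriv_le (g := fun t => pdDiag K (m + t, m - t))
    (G := fun t => G (m + t)) (by linarith)
    ((continuousOn_pdDiag hK).comp (by fun_prop) hmaps)
    (fun t _ => ((hG (m + t)).comp_const_add m t).continuousAt.continuousWithinAt)
    (fun t ht => hasDerivAt_pdDiag_characteristic hK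
      (mem_interior_Dset (by dsimp only; linarith [ht.2]) (by dsimp only; linarith [ht.1])
        (by dsimp only; linarith [ht.2])))
    (fun t _ => (hG (m + t)).comp_const_add m t)
    (fun t ht => hwave _ (hmaps (Ioo_subset_Icc_self ht)))
  have hdiag_m : pdDiag K (m, m) = lam0 / 2 :=
    (pdDiag_eq_add _).trans (hdiag m ⟨by linarith, by linarith⟩)
  have hma : m + (a - b) / 2 = a := by rw [hm]; ring
  have hmb : m - (a - b) / 2 = b := by rw [hm]; ring
  beta_reduce at hcmp
  rw [hma, hmb, add_zero, sub_zero, hdiag_m] at hcmp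
  have := abs_sub_abs_le_abs_sub (pdDiag K (a, b)) (lam0 / 2)
  rw [abs_div, abs_two] at this
  linarith

lemma abs_le_of_abs_pdDiag_le (hK : ContDiffOn ℝ 2 K Dset)
    (hedge : ∀ x ∈ Icc (0:ℝ) 1, pd2 K (x, 0) = 0) (h00 : K (0, 0) = 0)
    {G w : ℝ → ℝ} (hG : ∀ x, HasDerivAt G (w x) x)
    (hV : ∀ q ∈ Dset, |pdDiag K q| ≤ w q.1) {x y : ℝ} (hxy : (x, y) ∈ Dset) :
    |K (x, y)| ≤ G x - G 0 := by
  obtain ⟨hy0, hyx, hx1⟩ := hxy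
  have hKd : DifferentiableOn ℝ K Dset := hK.differentiableOn (by norm_num)
  have hedge_maps : MapsTo (fun r => (r, (0:ℝ))) (Icc 0 (x - y)) Dset :=
    fun r hr => ⟨le_rfl, hr.1, by linarith [hr.2]⟩
  have hedge_cmp := abs_sub_le_sub_of_abs_deriv_le (g := fun r => K (r, 0))
    (g' := fun r => pd1 K (r, 0)) (sub_nonneg.2 hyx)
    (hK.continuousOn.comp (by fun_prop) hedge_maps)
    (fun r _ => (hG r).continuousAt.continuousWithinAt)
    (fun r hr => hasDerivAt_comp_of_mapsTo_Icc hKd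
      ((hasDerivAt_id r).prodMk (hasDerivAt_const r 0)) hedge_maps hr)
    (fun r _ => hG r)
    (fun r hr => by
      have hr' := hedge_maps (Ioo_subset_Icc_self hr)
      simpa [pdDiag_eq_add, hedge r ⟨hr'.2.1, hr'.2.2⟩] using hV _ hr')
  have hchar_maps : MapsTo (fun s => (x - y + s, s)) (Icc 0 y) Dset :=
    fun s hs => ⟨hs.1, by dsimp only; linarith, by dsimp only; linarith [hs.2]⟩
  have hchar_cmp := abs_sub_le_sub_of_abs_deriv_le (g := fun s => K (x - y + s, s))
    (g' := fun s => pdDiag K (x - y + s, s)) (G := fun s => G (x - y + s)) hy0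
    (hK.continuousOn.comp (by fun_prop) hchar_maps)
    (fun s _ => ((hG _).comp_const_add (x - y) s).continuousAt.continuousWithinAt)
    (fun s hs => hasDerivAt_comp_of_mapsTo_Icc hKd
      (((hasDerivAt_id s).const_add (x - y)).prodMk (hasDerivAt_id s)) hchar_maps hs)
    (fun s _ => (hG _).comp_const_add (x - y) s)
    (fun s hs => hV _ (hchar_maps (Ioo_subset_Icc_self hs)))
  simp only [sub_add_cancel, add_zero, h00, sub_zero] at hedge_cmp hchar_cmp
  linarith [abs_sub_abs_le_abs_sub (K (x, y)) (K (x - y, 0))]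

end Characteristics

section KernelEstimate

variable {lam0 : ℝ} {c1 : ℝ → ℝ} {f : ℝ → ℝ → ℝ} {K : ℝ × ℝ → ℝ}

lemma abs_wave_le (hK : IsKernelSol lam0 c1 f K) (hc1 : ContinuousOn c1 (Icc 0 1))
    (hf : ContinuousOn (fun p : ℝ × ℝ => f p.1 p.2) (Icc 0 1 ×ˢ Icc 0 1))
    {b : ℝ → ℝ} (hb : ∀ q ∈ Dset, |K q| ≤ b q.1) {q : ℝ × ℝ} (hq : q ∈ Dset) :
    |pd1 (pd1 K) q - pd2 (pd2 K) q| ≤ fbar f + 2 * Mconst lam0 c1 f * b q.1 := by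
  rw [hK.2.1 q hq, two_mul_Mconst]
  obtain ⟨x, y⟩ := q
  obtain ⟨hy0, hyx, hx1⟩ := hq
  dsimp only at hy0 hyx hx1 ⊢
  have hb0 : 0 ≤ b x := (abs_nonneg _).trans (hb (x, x) ⟨hy0.trans hyx, le_rfl, hx1⟩)
  have hint : |∫ z in y..x, K (x, z) * f z y| ≤ b x * fbar f := by
    have hle : ∀ z ∈ uIoc y x, ‖K (x, z) * f z y‖ ≤ b x * fbar f := by
      intro z hz
      rw [uIoc_of_le hyx] at hz
      rw [Real.norm_eq_abs, abs_mul]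
      exact mul_le_mul (hb (x, z) ⟨hy0.trans hz.1.le, hz.2, hx1⟩)
        (abs_le_fbar hf ⟨hy0.trans hz.1.le, hz.2.trans hx1⟩ ⟨hy0, hyx.trans hx1⟩)
        (abs_nonneg _) hb0
    calc |∫ z in y..x, K (x, z) * f z y| ≤ b x * fbar f * |x - y| :=
          intervalIntegral.norm_integral_le_of_norm_le_const hle
      _ ≤ b x * fbar f :=
          mul_le_of_le_one_right (mul_nonneg hb0 fbar_nonneg)
            (by rw [abs_of_nonneg (sub_nonneg.2 hyx)]; linarith)
  have hμK : |lam0 - c1 x + c1 y| * |K (x, y)| ≤ Lambdabar lam0 c1 * b x :=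
    mul_le_mul (abs_mu_le_Lambdabar hc1 (p := (x, y)) ⟨hy0, hyx, hx1⟩) (hb _ ⟨hy0, hyx, hx1⟩)
      (abs_nonneg _) ((abs_nonneg _).trans (abs_lam0_le_Lambdabar hc1))
  have hfxy := abs_le_fbar hf ⟨hy0.trans hyx, hx1⟩ ⟨hy0, hyx.trans hx1⟩
  calc _ ≤ |lam0 - c1 x + c1 y| * |K (x, y)| + |f x y| + |∫ z in y..x, K (x, z) * f z y| := by
        rw [← abs_mul]; exact abs_add_three _ _ _
    _ ≤ fbar f + (fbar f + Lambdabar lam0 c1) * b x := by linarith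

/-- The rate `M + 1` makes `2M / (M + 1)² ≤ 1/2`: the two integrations from `k` back to `k` at
least halve the `θ`-term. -/
def expMajorant (M θ x : ℝ) : ℝ := M * Real.exp (2 * M * x) + θ * Real.exp ((M + 1) * x)

lemma abs_pdDiag_le_of_abs_le_expMajorant (hK : IsKernelSol lam0 c1 f K)
    (hc1 : ContinuousOn c1 (Icc 0 1))
    (hf : ContinuousOn (fun p : ℝ × ℝ => f p.1 p.2) (Icc 0 1 ×ˢ Icc 0 1)) {θ : ℝ} (hθ : 0 ≤ θ)
    (hbound : ∀ q ∈ Dset, |K q| ≤ expMajorant (Mconst lam0 c1 f) θ q.1) {q : ℝ × ℝ}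
    (hq : q ∈ Dset) :
    |pdDiag K q| ≤ Mconst lam0 c1 f * Real.exp (2 * Mconst lam0 c1 f * q.1)
      + 2 * Mconst lam0 c1 f * θ / (Mconst lam0 c1 f + 1)
        * Real.exp ((Mconst lam0 c1 f + 1) * q.1) := by
  set M := Mconst lam0 c1 f
  have hM : 0 ≤ M := Mconst_nonneg hc1
  have hG : ∀ x, HasDerivAt
      (fun x => fbar f * x + M * Real.exp (2 * M * x)
        + 2 * M * θ / (M + 1) * Real.exp ((M + 1) * x))
      (fbar f + 2 * M * expMajorant M θ x) x := fun x => by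
    refine ((((hasDerivAt_id x).const_mul (fbar f)).add
      ((hasDerivAt_exp_mul (2 * M) x).const_mul M)).add
      ((hasDerivAt_exp_mul (M + 1) x).const_mul (2 * M * θ / (M + 1)))).congr_deriv ?_
    unfold expMajorant; field_simp; ring
  obtain ⟨a, b⟩ := q
  have h := abs_pdDiag_le_of_abs_wave_le hK.1 hK.2.2.1 hG
    (fun q hq => abs_wave_le hK hc1 hf hbound hq) hq
  obtain ⟨hb0, hba, ha1⟩ := hq
  dsimp only at hb0 hba ha1 h ⊢
  have hexp₁ : 1 ≤ Real.exp (2 * M * ((a + b) / 2)) :=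
    Real.one_le_exp (mul_nonneg (mul_nonneg zero_le_two hM) (by linarith))
  have hexp₂ : 0 ≤ 2 * M * θ / (M + 1) * Real.exp ((M + 1) * ((a + b) / 2)) := by positivity
  have hf_half : fbar f * (a - (a + b) / 2) ≤ fbar f / 2 := by nlinarith [fbar_nonneg (f := f)]
  have hM_ge : |lam0| + fbar f ≤ 2 * M := by
    rw [two_mul_Mconst]; linarith [abs_lam0_le_Lambdabar (lam0 := lam0) hc1]
  nlinarith

lemma abs_le_expMajorant_half (hK : IsKernelSol lam0 c1 f K) (hc1 : ContinuousOn c1 (Icc 0 1))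
    (hf : ContinuousOn (fun p : ℝ × ℝ => f p.1 p.2) (Icc 0 1 ×ˢ Icc 0 1)) {θ : ℝ} (hθ : 0 ≤ θ)
    (hbound : ∀ q ∈ Dset, |K q| ≤ expMajorant (Mconst lam0 c1 f) θ q.1) :
    ∀ q ∈ Dset, |K q| ≤ expMajorant (Mconst lam0 c1 f) (θ / 2) q.1 := by
  set M := Mconst lam0 c1 f
  have hM : 0 ≤ M := Mconst_nonneg hc1
  have hG : ∀ x, HasDerivAt
      (fun x => Real.exp (2 * M * x) / 2 + 2 * M * θ / (M + 1) ^ 2 * Real.exp ((M + 1) * x))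
      (M * Real.exp (2 * M * x) + 2 * M * θ / (M + 1) * Real.exp ((M + 1) * x)) x := fun x => by
    refine (((hasDerivAt_exp_mul (2 * M) x).div_const 2).add
      ((hasDerivAt_exp_mul (M + 1) x).const_mul (2 * M * θ / (M + 1) ^ 2))).congr_deriv ?_
    field_simp
  rintro ⟨x, y⟩ hxy
  have h := abs_le_of_abs_pdDiag_le hK.1 hK.2.2.2.1 hK.2.2.2.2 hG
    (fun q hq => abs_pdDiag_le_of_abs_le_expMajorant hK hc1 hf hθ hbound hq) hxy
  obtain ⟨hy0, hyx, hx1⟩ := hxy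
  dsimp only at hy0 hyx hx1 h ⊢
  simp only [mul_zero, Real.exp_zero] at h
  have hexp : Real.exp (2 * M * x) - 1 ≤ 2 * M * Real.exp (2 * M * x) := by
    have := exp_sub_one_le_mul_exp (2 * M * x)
    nlinarith [Real.exp_pos (2 * M * x), mul_le_mul_of_nonneg_left hx1 hM]
  have hcoef : 2 * M * θ / (M + 1) ^ 2 ≤ θ / 2 := by
    rw [div_le_iff₀ (by positivity)]; nlinarith [sq_nonneg (M - 1)]
  have hcoef₀ : 0 ≤ 2 * M * θ / (M + 1) ^ 2 := by positivity
  unfold expMajorant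
  nlinarith [mul_le_mul_of_nonneg_right hcoef (Real.exp_pos ((M + 1) * x)).le]

end KernelEstimate

theorem kernel_equation_bound_general (lam0 : ℝ)
    (c1 : ℝ → ℝ) (hc1 : ContinuousOn c1 (Icc 0 1))
    (f : ℝ → ℝ → ℝ)
    (hf : ContinuousOn (fun p : ℝ × ℝ => f p.1 p.2) (Icc 0 1 ×ˢ Icc 0 1))
    (K : ℝ × ℝ → ℝ) (hK : IsKernelSol lam0 c1 f K) :
    ∀ p ∈ Dset, |K p| ≤ Mconst lam0 c1 f * Real.exp (2 * Mconst lam0 c1 f) := by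
  set M := Mconst lam0 c1 f
  have hM : 0 ≤ M := Mconst_nonneg hc1
  obtain ⟨A, hA⟩ := isCompact_Dset.exists_bound_of_continuousOn hK.1.continuousOn
  have hA0 : 0 ≤ A := (norm_nonneg _).trans (hA (0, 0) ⟨le_rfl, le_rfl, zero_le_one⟩)
  have hstart : ∀ q ∈ Dset, |K q| ≤ expMajorant M A q.1 := fun q hq => by
    have h1 : 1 ≤ Real.exp ((M + 1) * q.1) :=
      Real.one_le_exp (mul_nonneg (by linarith) (hq.1.trans hq.2.1))
    have h2 : 0 ≤ M * Real.exp (2 * M * q.1) := mul_nonneg hM (Real.exp_pos _).le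
    unfold expMajorant
    nlinarith [Real.norm_eq_abs (K q) ▸ hA q hq]
  have hiter : ∀ n : ℕ, ∀ q ∈ Dset, |K q| ≤ expMajorant M (A / 2 ^ n) q.1 := by
    intro n
    induction n with
    | zero => simpa using hstart
    | succ n ih =>
      simpa [pow_succ, div_div] using abs_le_expMajorant_half hK hc1 hf (by positivity) ih
  intro p hp
  calc |K p| ≤ M * Real.exp (2 * M * p.1) :=
        le_of_forall_le_add_div_two_pow (c := A * Real.exp ((M + 1) * p.1)) fun n =>
          (hiter n p hp).trans_eq (by unfold expMajorant; ring)
    _ ≤ M * Real.exp (2 * M) := mul_le_mul_of_nonneg_left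
        (Real.exp_le_exp.2 (mul_le_of_le_one_right (by linarith) hp.2.2)) hM

/-- Maximum estimate: any `C²` solution of the kernel equation satisfies
`|k(x,y)| ≤ M e^(2M)` on `D`, where `M = (f̄ + Λ̄)/2`. -/
theorem kernel_equation_bound (lam0 : ℝ) (hlam0 : 0 < lam0)
    (c1 : ℝ → ℝ) (hc1 : ContinuousOn c1 (Icc 0 1))
    (f : ℝ → ℝ → ℝ)
    (hf : ContinuousOn (fun p : ℝ × ℝ => f p.1 p.2) (Icc 0 1 ×ˢ Icc 0 1))
    (K : ℝ × ℝ → ℝ) (hK : IsKernelSol lam0 c1 f K) :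
    ∀ p ∈ Dset, |K p| ≤ Mconst lam0 c1 f * Real.exp (2 * Mconst lam0 c1 f) :=
  kernel_equation_bound_general lam0 c1 hc1 f hf K hK
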